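/- Let (M_k), (S_k) with S_k = Σ_{i=0}^k M_i, let 0 < λ < 1, and let (η_k) satisfy, for all k ≥ 1, η_k ≤ (a·(ω(λ^k) + μ^k))·S_k + b·(ω(λ^k) + μ^k + ν·λ^k) for constants a, b, ν ≥ 0, 0 < μ < 1, and a non-decreasing ω with Σ_k ω(λ^k) < ∞. If additionally M_{k+1} ≤ (1/4)M_k + η_k for k ≥ k₀, where k₀ is chosen so that Σ_{i=k₀}^∞ a·(ω(λ^i) + μ^i) ≤ 1/4, then the sequence (S_k) is bounded, and hence Σ_{k=0}^∞ M_k converges. -/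

import Mathlib

/-!
Summing `M (k + 1) ≤ q M k + c k S k + d k` over `k₀ ≤ k < n`, the contraction terms add up to
at most `q S n`, the coupling terms to at most `(∑_{k ≥ k₀} c k) S n ≤ ε S n` because `S` is
monotone, and the forcing terms to at most `∑ d k`. Hence `(1 - q - ε) S n ≤ S k₀ + ∑ d k`,
a bound independent of `n` once `q + ε < 1`; here `q = ε = 1/4`.
-/

open Finset

section RecursiveBound

variable {M c d : ℕ → ℝ} {q ε D : ℝ} {k₀ : ℕ}

lemma one_sub_mul_sum_range_le_of_le_mul_add (hM : ∀ k, 0 ≤ M k) (hc : ∀ k, 0 ≤ c k)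
    (hq : 0 ≤ q) (hc_tail : ∀ n, ∑ k ∈ Ico k₀ n, c k ≤ ε)
    (hd_tail : ∀ n, ∑ k ∈ Ico k₀ n, d k ≤ D)
    (hrec : ∀ k, k₀ ≤ k → M (k + 1) ≤ q * M k + c k * ∑ i ∈ range (k + 1), M i + d k)
    {n : ℕ} (hn : k₀ ≤ n) :
    (1 - q - ε) * ∑ i ∈ range (n + 1), M i ≤ ∑ i ∈ range (k₀ + 1), M i + D := by
  set S : ℕ → ℝ := fun m => ∑ i ∈ range (m + 1), M i with hS
  have hS_nonneg : 0 ≤ S n := sum_nonneg fun i _ => hM i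
  have hS_mono : Monotone S := fun m m' h =>
    sum_le_sum_of_subset_of_nonneg (range_subset_range.2 (by omega)) fun i _ _ => hM i
  have h_split : S n = S k₀ + ∑ k ∈ Ico k₀ n, M (k + 1) := by
    rw [sum_Ico_add', hS, sum_range_add_sum_Ico _ (by omega : k₀ + 1 ≤ n + 1)]
  have h_summed : ∑ k ∈ Ico k₀ n, M (k + 1) ≤
      ∑ k ∈ Ico k₀ n, q * M k + ∑ k ∈ Ico k₀ n, c k * S k + ∑ k ∈ Ico k₀ n, d k := by
    rw [← sum_add_distrib, ← sum_add_distrib]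
    exact sum_le_sum fun k hk => hrec k (mem_Ico.1 hk).1
  have h_contraction : ∑ k ∈ Ico k₀ n, q * M k ≤ q * S n := by
    rw [← mul_sum]
    refine mul_le_mul_of_nonneg_left
      (sum_le_sum_of_subset_of_nonneg ?_ fun i _ _ => hM i) hq
    exact fun k hk => mem_range.2 (by have := (mem_Ico.1 hk).2; omega)
  have h_coupling : ∑ k ∈ Ico k₀ n, c k * S k ≤ ε * S n :=
    calc ∑ k ∈ Ico k₀ n, c k * S k
        ≤ ∑ k ∈ Ico k₀ n, c k * S n :=
          sum_le_sum fun k hk => mul_le_mul_of_nonneg_left (hS_mono (mem_Ico.1 hk).2.le) (hc k)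
      _ = (∑ k ∈ Ico k₀ n, c k) * S n := (sum_mul _ _ _).symm
      _ ≤ ε * S n := mul_le_mul_of_nonneg_right (hc_tail n) hS_nonneg
  linarith [hd_tail n]

lemma summable_of_le_mul_add_mul_sum_range (hM : ∀ k, 0 ≤ M k) (hc : ∀ k, 0 ≤ c k)
    (hq : 0 ≤ q) (hc_tail : ∀ n, ∑ k ∈ Ico k₀ n, c k ≤ ε)
    (hd_tail : ∀ n, ∑ k ∈ Ico k₀ n, d k ≤ D)
    (hrec : ∀ k, k₀ ≤ k → M (k + 1) ≤ q * M k + c k * ∑ i ∈ range (k + 1), M i + d k)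
    (hqε : q + ε < 1) : Summable M := by
  refine summable_of_sum_range_le hM
    (c := (∑ i ∈ range (k₀ + 1), M i + D) / (1 - q - ε)) fun n => ?_
  calc ∑ i ∈ range n, M i
      ≤ ∑ i ∈ range (max n k₀ + 1), M i :=
        sum_le_sum_of_subset_of_nonneg (range_subset_range.2 (by omega)) fun i _ _ => hM i
    _ ≤ _ := by
        rw [le_div_iff₀ (by linarith), mul_comm]
        exact one_sub_mul_sum_range_le_of_le_mul_add hM hc hq hc_tail hd_tail hrec
          (le_max_right n k₀)

end RecursiveBound

lemma sum_Ico_le_tsum_nat_add {f : ℕ → ℝ} (hf : Summable f) (hf_nonneg : ∀ k, 0 ≤ f k)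
    (m n : ℕ) : ∑ k ∈ Ico m n, f k ≤ ∑' i, f (m + i) := by
  rw [sum_Ico_eq_sum_range]
  exact (hf.comp_injective (add_right_injective m)).sum_le_tsum _ fun i _ => hf_nonneg _

theorem step2_convergence_general (M η : ℕ → ℝ) (ω : ℝ → ℝ) (lam μ a b ν : ℝ) (k₀ : ℕ)
    (hM : ∀ k, 0 ≤ M k)
    (hlam0 : 0 < lam) (hlam1 : lam < 1) (hμ0 : 0 < μ) (hμ1 : μ < 1)
    (ha : 0 ≤ a) (hb : 0 ≤ b) (hν : 0 ≤ ν)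
    (hωnonneg : ∀ r, 0 < r → r ≤ 1 → 0 ≤ ω r)
    (hωsum : Summable (fun k : ℕ => ω (lam ^ k)))
    (hηbound : ∀ k, 1 ≤ k →
      η k ≤ a * (ω (lam ^ k) + μ ^ k) * (∑ i ∈ Finset.range (k + 1), M i) +
            b * (ω (lam ^ k) + μ ^ k + ν * lam ^ k))
    (hk₀ : 1 ≤ k₀)
    (htail : (∑' i : ℕ, a * (ω (lam ^ (k₀ + i)) + μ ^ (k₀ + i))) ≤ 1 / 4)
    (hrec : ∀ k, k₀ ≤ k → M (k + 1) ≤ (1 / 4) * M k + η k) :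
    (∃ C : ℝ, ∀ k, (∑ i ∈ Finset.range (k + 1), M i) ≤ C) ∧ Summable M := by
  set c : ℕ → ℝ := fun k => a * (ω (lam ^ k) + μ ^ k)
  set d : ℕ → ℝ := fun k => b * (ω (lam ^ k) + μ ^ k + ν * lam ^ k)
  have hω : ∀ k : ℕ, 0 ≤ ω (lam ^ k) := fun k =>
    hωnonneg _ (pow_pos hlam0 k) (pow_le_one₀ hlam0.le hlam1.le)
  have hc : ∀ k, 0 ≤ c k := fun k => mul_nonneg ha (add_nonneg (hω k) (pow_nonneg hμ0.le k))
  have hd : ∀ k, 0 ≤ d k := fun k => mul_nonneg hb <|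
    add_nonneg (add_nonneg (hω k) (pow_nonneg hμ0.le k)) (mul_nonneg hν (pow_nonneg hlam0.le k))
  have hμ_sum := summable_geometric_of_lt_one hμ0.le hμ1
  have hc_sum : Summable c := (hωsum.add hμ_sum).mul_left a
  have hd_sum : Summable d :=
    ((hωsum.add hμ_sum).add ((summable_geometric_of_lt_one hlam0.le hlam1).mul_left ν)).mul_left b
  have hM_sum : Summable M :=
    summable_of_le_mul_add_mul_sum_range (q := 1 / 4) (ε := 1 / 4) hM hc (by norm_num)
      (fun n => (sum_Ico_le_tsum_nat_add hc_sum hc k₀ n).trans htail)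
      (fun n => hd_sum.sum_le_tsum _ fun k _ => hd k)
      (fun k hk => (hrec k hk).trans (by linarith [hηbound k (hk₀.trans hk)])) (by norm_num)
  exact ⟨⟨∑' k, M k, fun k => hM_sum.sum_le_tsum _ fun i _ => hM i⟩, hM_sum⟩

/-- Abstract convergence argument of Step 2: if `η_k` is controlled by Dini-type terms times
the partial sums `S_k`, `M_{k+1} ≤ M_k/4 + η_k` for `k ≥ k₀`, and the tail sum of the
Dini coefficients beyond `k₀` is at most `1/4`, then the partial sums `(S_k)` are bounded
and `Σ M_k` converges. -/
theorem step2_convergence (M η : ℕ → ℝ) (ω : ℝ → ℝ) (lam μ a b ν : ℝ) (k₀ : ℕ)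
    (hM : ∀ k, 0 ≤ M k) (hη : ∀ k, 0 ≤ η k)
    (hlam0 : 0 < lam) (hlam1 : lam < 1) (hμ0 : 0 < μ) (hμ1 : μ < 1)
    (ha : 0 ≤ a) (hb : 0 ≤ b) (hν : 0 ≤ ν)
    (hωmono : ∀ r s, 0 < r → r ≤ s → s ≤ 1 → ω r ≤ ω s)
    (hωnonneg : ∀ r, 0 < r → r ≤ 1 → 0 ≤ ω r)
    (hωsum : Summable (fun k : ℕ => ω (lam ^ k)))
    (hηbound : ∀ k, 1 ≤ k →
      η k ≤ a * (ω (lam ^ k) + μ ^ k) * (∑ i ∈ Finset.range (k + 1), M i) +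
            b * (ω (lam ^ k) + μ ^ k + ν * lam ^ k))
    (hk₀ : 1 ≤ k₀)
    (htail : (∑' i : ℕ, a * (ω (lam ^ (k₀ + i)) + μ ^ (k₀ + i))) ≤ 1 / 4)
    (hrec : ∀ k, k₀ ≤ k → M (k + 1) ≤ (1 / 4) * M k + η k) :
    (∃ C : ℝ, ∀ k, (∑ i ∈ Finset.range (k + 1), M i) ≤ C) ∧ Summable M :=
  step2_convergence_general M η ω lam μ a b ν k₀ hM hlam0 hlam1 hμ0 hμ1 ha hb hν hωnonneg hωsum
    hηbound hk₀ htail hrec
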